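/- arXiv:1012.2488 — 4 statements merged into one kernel-verified Lean document; each statement's English description precedes it below -/
import Mathlib

section
/- For a commutative semigroup X, the semigroup λ(X) is linear if and only if X is a linear semilattice of order |X| ≤ 3. -/
open Set

/-- An upfamily on `X`: a collection of nonempty subsets of `X` closed under taking supersets. -/
def IsUpfamily {X : Type*} (𝒜 : Set (Set X)) : Prop :=
  (∀ A ∈ 𝒜, A.Nonempty) ∧ ∀ A ∈ 𝒜, ∀ B : Set X, A ⊆ B → B ∈ 𝒜

/-- The product of two upfamilies on a semigroup `(X, *)`:
`𝒜 ∗ ℬ = {C ⊆ X : ∃ A ∈ 𝒜, ∃ (B_x)_{x ∈ A} in ℬ, ⋃_{x ∈ A} x·B_x ⊆ C}`. -/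
def upMul {X : Type*} [Mul X] (𝒜 ℬ : Set (Set X)) : Set (Set X) :=
  {C | ∃ A ∈ 𝒜, ∃ Bf : X → Set X, (∀ x ∈ A, Bf x ∈ ℬ) ∧
    (⋃ x ∈ A, (fun b => x * b) '' Bf x) ⊆ C}

/-- A filter on `X`: an upfamily closed under binary intersections. -/
def IsFilterUp {X : Type*} (𝒜 : Set (Set X)) : Prop :=
  IsUpfamily 𝒜 ∧ ∀ A ∈ 𝒜, ∀ B ∈ 𝒜, A ∩ B ∈ 𝒜

/-- A linked upfamily: any two of its members intersect. -/
def IsLinkedUp {X : Type*} (𝒜 : Set (Set X)) : Prop :=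
  IsUpfamily 𝒜 ∧ ∀ A ∈ 𝒜, ∀ B ∈ 𝒜, (A ∩ B).Nonempty

/-- A maximal linked upfamily: it equals every linked upfamily containing it. -/
def IsMaxLinkedUp {X : Type*} (𝒜 : Set (Set X)) : Prop :=
  IsLinkedUp 𝒜 ∧ ∀ ℬ : Set (Set X), IsLinkedUp ℬ → 𝒜 ⊆ ℬ → 𝒜 = ℬ


section Aux

variable {X : Type*}

/-- The principal maximal linked upfamily at `x`. -/
def princ (x : X) : Set (Set X) := {A | x ∈ A}

/-- The "triangle" upfamily determined by three points: sets containing at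
least two of them. -/
def tri (a b c : X) : Set (Set X) :=
  {S | (a ∈ S ∧ b ∈ S) ∨ (a ∈ S ∧ c ∈ S) ∨ (b ∈ S ∧ c ∈ S)}

lemma princ_isMaxLinked (x : X) : IsMaxLinkedUp (princ x) := by
  refine ⟨⟨⟨fun A hA => ⟨x, hA⟩, fun A hA B hAB => hAB hA⟩,
    fun A hA B hB => ⟨x, hA, hB⟩⟩, ?_⟩
  intro ℬ hB hsub
  refine Set.Subset.antisymm hsub (fun B hBmem => ?_)
  obtain ⟨y, hy1, hy2⟩ := hB.2 B hBmem {x} (hsub (rfl : x ∈ ({x} : Set X)))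
  have : y = x := hy2
  exact this ▸ hy1

lemma princ_inj {x y : X} (h : princ x = princ y) : x = y := by
  have : ({x} : Set X) ∈ princ y := h ▸ (rfl : x ∈ ({x} : Set X))
  exact (Set.mem_singleton_iff.mp this).symm

lemma mem_upMul_of [Mul X] {𝒜 ℬ : Set (Set X)} {C : Set X} (A : Set X) (hA : A ∈ 𝒜)
    (Bf : X → Set X) (hBf : ∀ x ∈ A, Bf x ∈ ℬ)
    (h : ∀ x ∈ A, ∀ b ∈ Bf x, x * b ∈ C) : C ∈ upMul 𝒜 ℬ := by
  refine ⟨A, hA, Bf, hBf, ?_⟩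
  intro z hz
  simp only [Set.mem_iUnion, Set.mem_image] at hz
  obtain ⟨x, hx, b, hb, rfl⟩ := hz
  exact h x hx b hb

lemma upMul_elim [Mul X] {𝒜 ℬ : Set (Set X)} {C : Set X} (h : C ∈ upMul 𝒜 ℬ) :
    ∃ A ∈ 𝒜, ∃ Bf : X → Set X, (∀ x ∈ A, Bf x ∈ ℬ) ∧
      ∀ x ∈ A, ∀ b ∈ Bf x, x * b ∈ C := by
  obtain ⟨A, hA, Bf, hBf, hsub⟩ := h
  refine ⟨A, hA, Bf, hBf, fun x hx b hb => hsub ?_⟩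
  exact Set.mem_biUnion hx ⟨b, hb, rfl⟩

lemma upMul_princ [Mul X] (x y : X) : upMul (princ x) (princ y) = princ (x * y) := by
  ext C
  constructor
  · intro h
    obtain ⟨A, hA, Bf, hBf, hp⟩ := upMul_elim h
    exact hp x hA y (hBf x hA)
  · intro hC
    exact mem_upMul_of {x} rfl (fun _ => {y}) (fun _ _ => rfl)
      (by rintro _ rfl _ rfl; exact hC)

lemma upMul_empty_left [Mul X] (ℬ : Set (Set X)) : upMul (∅ : Set (Set X)) ℬ = ∅ := by
  ext C
  simp only [Set.mem_empty_iff_false, iff_false]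
  rintro ⟨A, hA, -⟩
  exact hA

lemma upMul_empty_right [Mul X] {𝒜 : Set (Set X)} (h : ∀ A ∈ 𝒜, A.Nonempty) :
    upMul 𝒜 (∅ : Set (Set X)) = ∅ := by
  ext C
  simp only [Set.mem_empty_iff_false, iff_false]
  rintro ⟨A, hA, Bf, hBf, -⟩
  obtain ⟨x, hx⟩ := h A hA
  exact hBf x hx

lemma mem_of_meets {𝒜 : Set (Set X)} (h𝒜 : IsMaxLinkedUp 𝒜) {B : Set X}
    (hne : B.Nonempty) (hB : ∀ A ∈ 𝒜, (A ∩ B).Nonempty) : B ∈ 𝒜 := by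
  have hlink : IsLinkedUp (𝒜 ∪ {C | B ⊆ C}) := by
    refine ⟨⟨?_, ?_⟩, ?_⟩
    · rintro A (hA | hA)
      · exact h𝒜.1.1.1 A hA
      · exact hne.mono hA
    · rintro A (hA | hA) C hAC
      · exact Or.inl (h𝒜.1.1.2 A hA C hAC)
      · exact Or.inr (Set.Subset.trans hA hAC)
    · rintro A (hA | hA) C (hC | hC)
      · exact h𝒜.1.2 A hA C hC
      · obtain ⟨z, hz1, hz2⟩ := hB A hA
        exact ⟨z, hz1, hC hz2⟩
      · obtain ⟨z, hz1, hz2⟩ := hB C hC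
        exact ⟨z, hA hz2, hz1⟩
      · obtain ⟨z, hz⟩ := hne
        exact ⟨z, hA hz, hC hz⟩
  have := h𝒜.2 _ hlink Set.subset_union_left
  rw [this]
  exact Or.inr (Set.Subset.refl B)

lemma tri_isMaxLinked {a b c : X} (hab : a ≠ b) (hac : a ≠ c) (hbc : b ≠ c) :
    IsMaxLinkedUp (tri a b c) := by
  refine ⟨⟨⟨?_, ?_⟩, ?_⟩, ?_⟩
  · rintro A (⟨h1, h2⟩ | ⟨h1, h2⟩ | ⟨h1, h2⟩)
    exacts [⟨a, h1⟩, ⟨a, h1⟩, ⟨b, h1⟩]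
  · rintro A (⟨h1, h2⟩ | ⟨h1, h2⟩ | ⟨h1, h2⟩) B hAB
    exacts [Or.inl ⟨hAB h1, hAB h2⟩, Or.inr (Or.inl ⟨hAB h1, hAB h2⟩),
      Or.inr (Or.inr ⟨hAB h1, hAB h2⟩)]
  · rintro A (⟨h1, h2⟩ | ⟨h1, h2⟩ | ⟨h1, h2⟩) B (⟨g1, g2⟩ | ⟨g1, g2⟩ | ⟨g1, g2⟩) <;>
      first
        | exact ⟨a, ‹a ∈ A›, ‹a ∈ B›⟩
        | exact ⟨b, ‹b ∈ A›, ‹b ∈ B›⟩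
        | exact ⟨c, ‹c ∈ A›, ‹c ∈ B›⟩
  · intro ℬ hB hsub
    refine Set.Subset.antisymm hsub (fun B hBmem => ?_)
    have hmab : ({a, b} : Set X) ∈ ℬ := hsub (Or.inl ⟨by simp, by simp⟩)
    have hmac : ({a, c} : Set X) ∈ ℬ := hsub (Or.inr (Or.inl ⟨by simp, by simp⟩))
    have hmbc : ({b, c} : Set X) ∈ ℬ := hsub (Or.inr (Or.inr ⟨by simp, by simp⟩))
    obtain ⟨u, hu1, hu2⟩ := hB.2 B hBmem _ hmab
    obtain ⟨v, hv1, hv2⟩ := hB.2 B hBmem _ hmac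
    obtain ⟨w, hw1, hw2⟩ := hB.2 B hBmem _ hmbc
    simp only [Set.mem_insert_iff, Set.mem_singleton_iff] at hu2 hv2 hw2
    rcases hu2 with rfl | rfl <;> rcases hv2 with rfl | rfl <;>
      rcases hw2 with rfl | rfl <;>
      first
        | exact Or.inl ⟨‹_›, ‹_›⟩
        | exact Or.inr (Or.inl ⟨‹_›, ‹_›⟩)
        | exact Or.inr (Or.inr ⟨‹_›, ‹_›⟩)

lemma tri_subset {p q r p' q' r' : X} (hpq : p ≠ q) (hpr : p ≠ r) (hqr : q ≠ r)
    (hall : ∀ z : X, z = p' ∨ z = q' ∨ z = r') : tri p q r ⊆ tri p' q' r' := by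
  have key : ∀ (A : Set X) (u v : X), u ≠ v → u ∈ A → v ∈ A → A ∈ tri p' q' r' := by
    intro A u v huv hu hv
    rcases hall u with rfl | rfl | rfl <;> rcases hall v with rfl | rfl | rfl <;>
      first
        | exact absurd rfl huv
        | exact Or.inl ⟨‹_›, ‹_›⟩
        | exact Or.inr (Or.inl ⟨‹_›, ‹_›⟩)
        | exact Or.inr (Or.inr ⟨‹_›, ‹_›⟩)
  rintro A (⟨h1, h2⟩ | ⟨h1, h2⟩ | ⟨h1, h2⟩)
  exacts [key A p q hpq h1 h2, key A p r hpr h1 h2, key A q r hqr h1 h2]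

end Aux

section Mul

variable {X : Type*} [CommSemigroup X]

lemma le3_trans {x y z : X} (h1 : x * y = x) (h2 : y * z = y) : x * z = x := by
  calc x * z = (x * y) * z := by rw [h1]
    _ = x * (y * z) := mul_assoc _ _ _
    _ = x * y := by rw [h2]
    _ = x := h1

lemma sort3 (hlin : ∀ x y : X, x * y = x ∨ x * y = y) {a b c : X}
    (hab : a ≠ b) (hac : a ≠ c) (hbc : b ≠ c) :
    ∃ p q r : X, (p ≠ q ∧ p ≠ r ∧ q ≠ r) ∧ (p * q = p ∧ p * r = p ∧ q * r = q) ∧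
      (∀ z : X, (z = a ∨ z = b ∨ z = c) ↔ (z = p ∨ z = q ∨ z = r)) := by
  rcases hlin a b with h1 | h1
  · rcases hlin b c with h2 | h2
    · exact ⟨a, b, c, ⟨hab, hac, hbc⟩, ⟨h1, le3_trans h1 h2, h2⟩, fun z => by tauto⟩
    · have h2' : c * b = c := by rw [mul_comm]; exact h2
      rcases hlin a c with h3 | h3
      · exact ⟨a, c, b, ⟨hac, hab, hbc.symm⟩, ⟨h3, h1, h2'⟩, fun z => by tauto⟩
      · have h3' : c * a = c := by rw [mul_comm]; exact h3
        exact ⟨c, a, b, ⟨hac.symm, hbc.symm, hab⟩, ⟨h3', h2', h1⟩, fun z => by tauto⟩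
  · have h1' : b * a = b := by rw [mul_comm]; exact h1
    rcases hlin a c with h3 | h3
    · exact ⟨b, a, c, ⟨hab.symm, hbc, hac⟩, ⟨h1', le3_trans h1' h3, h3⟩,
        fun z => by tauto⟩
    · have h3' : c * a = c := by rw [mul_comm]; exact h3
      rcases hlin b c with h2 | h2
      · exact ⟨b, c, a, ⟨hbc, hab.symm, hac.symm⟩, ⟨h2, h1', h3'⟩, fun z => by tauto⟩
      · have h2' : c * b = c := by rw [mul_comm]; exact h2
        exact ⟨c, b, a, ⟨hbc.symm, hac.symm, hab.symm⟩, ⟨h2', h3', h1'⟩,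
          fun z => by tauto⟩

lemma sort4 (hlin : ∀ x y : X, x * y = x ∨ x * y = y) {a b c d : X}
    (hab : a ≠ b) (hac : a ≠ c) (had : a ≠ d) (hbc : b ≠ c) (hbd : b ≠ d)
    (hcd : c ≠ d) :
    ∃ x1 x2 x3 x4 : X,
      (x1 ≠ x2 ∧ x1 ≠ x3 ∧ x1 ≠ x4 ∧ x2 ≠ x3 ∧ x2 ≠ x4 ∧ x3 ≠ x4) ∧
      (x1 * x2 = x1 ∧ x1 * x3 = x1 ∧ x1 * x4 = x1 ∧
        x2 * x3 = x2 ∧ x2 * x4 = x2 ∧ x3 * x4 = x3) := by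
  obtain ⟨p, q, r, ⟨hpq, hpr, hqr⟩, ⟨mpq, mpr, mqr⟩, hperm⟩ := sort3 hlin hab hac hbc
  have hd : ¬(d = p ∨ d = q ∨ d = r) := by
    intro h
    rcases (hperm d).mpr h with h' | h' | h' 
    exacts [had h'.symm, hbd h'.symm, hcd h'.symm]
  push_neg at hd
  obtain ⟨hdp, hdq, hdr⟩ := hd
  rcases hlin d q with h1 | h1
  · -- d ≤ q
    rcases hlin d p with h2 | h2
    · -- d ≤ p : order d p q r
      exact ⟨d, p, q, r, ⟨hdp, hdq, hdr, hpq, hpr, hqr⟩,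
        ⟨h2, h1, le3_trans h1 mqr, mpq, mpr, mqr⟩⟩
    · -- p ≤ d : order p d q r
      have h2' : p * d = p := by rw [mul_comm]; exact h2
      exact ⟨p, d, q, r, ⟨hdp.symm, hpq, hpr, hdq, hdr, hqr⟩,
        ⟨h2', mpq, mpr, h1, le3_trans h1 mqr, mqr⟩⟩
  · -- q ≤ d
    have h1' : q * d = q := by rw [mul_comm]; exact h1
    rcases hlin d r with h2 | h2
    · -- d ≤ r : order p q d r
      exact ⟨p, q, d, r, ⟨hpq, hdp.symm, hpr, hdq.symm, hqr, hdr⟩,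
        ⟨mpq, le3_trans mpq h1', mpr, h1', mqr, h2⟩⟩
    · -- r ≤ d : order p q r d
      have h2' : r * d = r := by rw [mul_comm]; exact h2
      exact ⟨p, q, r, d, ⟨hpq, hpr, hdp.symm, hqr, hdq.symm, hdr.symm⟩,
        ⟨mpq, mpr, le3_trans mpr h2', mqr, le3_trans mqr h2', h2'⟩⟩

end Mul

section Prod
set_option linter.unusedSectionVars false

variable {X : Type*} [CommSemigroup X]
variable {p q r : X}

/-- Common hypotheses: `p < q < r` in the semilattice order, all idempotent. -/
structure Sorted3 (p q r : X) : Prop where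
  hpq : p ≠ q
  hpr : p ≠ r
  hqr : q ≠ r
  hpp : p * p = p
  hqq : q * q = q
  hrr : r * r = r
  mpq : p * q = p
  mpr : p * r = p
  mqr : q * r = q

namespace Sorted3

lemma mqp (h : Sorted3 p q r) : q * p = p := by rw [mul_comm]; exact h.mpq
lemma mrp (h : Sorted3 p q r) : r * p = p := by rw [mul_comm]; exact h.mpr
lemma mrq (h : Sorted3 p q r) : r * q = q := by rw [mul_comm]; exact h.mqr

lemma pq_mem (_h : Sorted3 p q r) : ({p, q} : Set X) ∈ tri p q r := Or.inl ⟨by simp, by simp⟩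
lemma pr_mem (_h : Sorted3 p q r) : ({p, r} : Set X) ∈ tri p q r := Or.inr (Or.inl ⟨by simp, by simp⟩)
lemma qr_mem (_h : Sorted3 p q r) : ({q, r} : Set X) ∈ tri p q r := Or.inr (Or.inr ⟨by simp, by simp⟩)

/-- `⟨p⟩ ∗ △ = ⟨p⟩`. -/
lemma princ_p_mul_tri (h : Sorted3 p q r) : upMul (princ p) (tri p q r) = princ p := by
  ext C
  constructor
  · intro hm
    obtain ⟨A, hA, Bf, hBf, hp⟩ := upMul_elim hm
    rcases hBf p hA with ⟨h1, h2⟩ | ⟨h1, h2⟩ | ⟨h1, h2⟩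
    · have := hp p hA p h1; rwa [h.hpp] at this
    · have := hp p hA p h1; rwa [h.hpp] at this
    · have := hp p hA q h1; rwa [h.mpq] at this
  · intro hC
    refine mem_upMul_of {p} rfl (fun _ => {p, q}) (fun _ _ => h.pq_mem) ?_
    rintro x rfl b hb
    rcases hb with rfl | hb
    · rwa [h.hpp]
    · rcases hb with rfl; rwa [h.mpq]

/-- `⟨q⟩ ∗ △ = ⟨q⟩`. -/
lemma princ_q_mul_tri (h : Sorted3 p q r) : upMul (princ q) (tri p q r) = princ q := by
  ext C
  constructor
  · intro hm
    obtain ⟨A, hA, Bf, hBf, hp⟩ := upMul_elim hm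
    rcases hBf q hA with ⟨h1, h2⟩ | ⟨h1, h2⟩ | ⟨h1, h2⟩
    · have := hp q hA q h2; rwa [h.hqq] at this
    · have := hp q hA r h2; rwa [h.mqr] at this
    · have := hp q hA q h1; rwa [h.hqq] at this
  · intro hC
    refine mem_upMul_of {q} rfl (fun _ => {q, r}) (fun _ _ => h.qr_mem) ?_
    rintro x rfl b hb
    rcases hb with rfl | hb
    · rwa [h.hqq]
    · rcases hb with rfl; rwa [h.mqr]

/-- `⟨r⟩ ∗ △ = △`. -/
lemma princ_r_mul_tri (h : Sorted3 p q r) : upMul (princ r) (tri p q r) = tri p q r := by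
  ext C
  constructor
  · intro hm
    obtain ⟨A, hA, Bf, hBf, hp⟩ := upMul_elim hm
    rcases hBf r hA with ⟨h1, h2⟩ | ⟨h1, h2⟩ | ⟨h1, h2⟩
    · have c1 := hp r hA p h1; rw [h.mrp] at c1
      have c2 := hp r hA q h2; rw [h.mrq] at c2
      exact Or.inl ⟨c1, c2⟩
    · have c1 := hp r hA p h1; rw [h.mrp] at c1
      have c2 := hp r hA r h2; rw [h.hrr] at c2
      exact Or.inr (Or.inl ⟨c1, c2⟩)
    · have c1 := hp r hA q h1; rw [h.mrq] at c1
      have c2 := hp r hA r h2; rw [h.hrr] at c2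
      exact Or.inr (Or.inr ⟨c1, c2⟩)
  · rintro (⟨h1, h2⟩ | ⟨h1, h2⟩ | ⟨h1, h2⟩)
    · refine mem_upMul_of {r} rfl (fun _ => {p, q}) (fun _ _ => h.pq_mem) ?_
      rintro x rfl b (rfl | hb)
      · rwa [h.mrp]
      · rcases hb with rfl; rwa [h.mrq]
    · refine mem_upMul_of {r} rfl (fun _ => {p, r}) (fun _ _ => h.pr_mem) ?_
      rintro x rfl b (rfl | hb)
      · rwa [h.mrp]
      · rcases hb with rfl; rwa [h.hrr]
    · refine mem_upMul_of {r} rfl (fun _ => {q, r}) (fun _ _ => h.qr_mem) ?_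
      rintro x rfl b (rfl | hb)
      · rwa [h.mrq]
      · rcases hb with rfl; rwa [h.hrr]

/-- `△ ∗ ⟨p⟩ = ⟨p⟩`. -/
lemma tri_mul_princ_p (h : Sorted3 p q r) : upMul (tri p q r) (princ p) = princ p := by
  ext C
  constructor
  · intro hm
    obtain ⟨A, hA, Bf, hBf, hp⟩ := upMul_elim hm
    rcases hA with ⟨h1, h2⟩ | ⟨h1, h2⟩ | ⟨h1, h2⟩
    · have := hp p h1 p (hBf p h1); rwa [h.hpp] at this
    · have := hp p h1 p (hBf p h1); rwa [h.hpp] at this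
    · have := hp q h1 p (hBf q h1); rwa [h.mqp] at this
  · intro hC
    refine mem_upMul_of {p, q} h.pq_mem (fun _ => {p}) (fun _ _ => rfl) ?_
    rintro x (rfl | hx) b rfl
    · rwa [h.hpp]
    · rcases hx with rfl; rwa [h.mqp]

/-- `△ ∗ ⟨q⟩ = ⟨q⟩`. -/
lemma tri_mul_princ_q (h : Sorted3 p q r) : upMul (tri p q r) (princ q) = princ q := by
  ext C
  constructor
  · intro hm
    obtain ⟨A, hA, Bf, hBf, hp⟩ := upMul_elim hm
    rcases hA with ⟨h1, h2⟩ | ⟨h1, h2⟩ | ⟨h1, h2⟩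
    · have := hp q h2 q (hBf q h2); rwa [h.hqq] at this
    · have := hp r h2 q (hBf r h2); rwa [h.mrq] at this
    · have := hp q h1 q (hBf q h1); rwa [h.hqq] at this
  · intro hC
    refine mem_upMul_of {q, r} h.qr_mem (fun _ => {q}) (fun _ _ => rfl) ?_
    rintro x (rfl | hx) b rfl
    · rwa [h.hqq]
    · rcases hx with rfl; rwa [h.mrq]

/-- `△ ∗ ⟨r⟩ = △`. -/
lemma tri_mul_princ_r (h : Sorted3 p q r) : upMul (tri p q r) (princ r) = tri p q r := by
  ext C
  constructor
  · intro hm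
    obtain ⟨A, hA, Bf, hBf, hp⟩ := upMul_elim hm
    rcases hA with ⟨h1, h2⟩ | ⟨h1, h2⟩ | ⟨h1, h2⟩
    · have c1 := hp p h1 r (hBf p h1); rw [h.mpr] at c1
      have c2 := hp q h2 r (hBf q h2); rw [h.mqr] at c2
      exact Or.inl ⟨c1, c2⟩
    · have c1 := hp p h1 r (hBf p h1); rw [h.mpr] at c1
      have c2 := hp r h2 r (hBf r h2); rw [h.hrr] at c2
      exact Or.inr (Or.inl ⟨c1, c2⟩)
    · have c1 := hp q h1 r (hBf q h1); rw [h.mqr] at c1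
      have c2 := hp r h2 r (hBf r h2); rw [h.hrr] at c2
      exact Or.inr (Or.inr ⟨c1, c2⟩)
  · rintro (⟨h1, h2⟩ | ⟨h1, h2⟩ | ⟨h1, h2⟩)
    · refine mem_upMul_of {p, q} h.pq_mem (fun _ => {r}) (fun _ _ => rfl) ?_
      rintro x (rfl | hx) b rfl
      · rwa [h.mpr]
      · rcases hx with rfl; rwa [h.mqr]
    · refine mem_upMul_of {p, r} h.pr_mem (fun _ => {r}) (fun _ _ => rfl) ?_
      rintro x (rfl | hx) b rfl
      · rwa [h.mpr]
      · rcases hx with rfl; rwa [h.hrr]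
    · refine mem_upMul_of {q, r} h.qr_mem (fun _ => {r}) (fun _ _ => rfl) ?_
      rintro x (rfl | hx) b rfl
      · rwa [h.mqr]
      · rcases hx with rfl; rwa [h.hrr]

/-- `△ ∗ △ = △`. -/
lemma tri_mul_tri (h : Sorted3 p q r) : upMul (tri p q r) (tri p q r) = tri p q r := by
  classical
  ext C
  constructor
  · intro hm
    obtain ⟨A, hA, Bf, hBf, hp⟩ := upMul_elim hm
    have fp : p ∈ A → p ∈ C := by
      intro hpA
      rcases hBf p hpA with ⟨h1, h2⟩ | ⟨h1, h2⟩ | ⟨h1, h2⟩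
      · have := hp p hpA p h1; rwa [h.hpp] at this
      · have := hp p hpA p h1; rwa [h.hpp] at this
      · have := hp p hpA q h1; rwa [h.mpq] at this
    have fq : q ∈ A → q ∈ C := by
      intro hqA
      rcases hBf q hqA with ⟨h1, h2⟩ | ⟨h1, h2⟩ | ⟨h1, h2⟩
      · have := hp q hqA q h2; rwa [h.hqq] at this
      · have := hp q hqA r h2; rwa [h.mqr] at this
      · have := hp q hqA q h1; rwa [h.hqq] at this
    have fr : r ∈ A → C ∈ tri p q r := by
      intro hrA
      rcases hBf r hrA with ⟨h1, h2⟩ | ⟨h1, h2⟩ | ⟨h1, h2⟩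
      · have c1 := hp r hrA p h1; rw [h.mrp] at c1
        have c2 := hp r hrA q h2; rw [h.mrq] at c2
        exact Or.inl ⟨c1, c2⟩
      · have c1 := hp r hrA p h1; rw [h.mrp] at c1
        have c2 := hp r hrA r h2; rw [h.hrr] at c2
        exact Or.inr (Or.inl ⟨c1, c2⟩)
      · have c1 := hp r hrA q h1; rw [h.mrq] at c1
        have c2 := hp r hrA r h2; rw [h.hrr] at c2
        exact Or.inr (Or.inr ⟨c1, c2⟩)
    rcases hA with ⟨h1, h2⟩ | ⟨h1, h2⟩ | ⟨h1, h2⟩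
    · exact Or.inl ⟨fp h1, fq h2⟩
    · exact fr h2
    · exact fr h2
  · rintro (⟨h1, h2⟩ | ⟨h1, h2⟩ | ⟨h1, h2⟩)
    · refine mem_upMul_of {p, q} (h.pq_mem) (fun _ => {q, r})
        (fun _ _ => h.qr_mem) ?_
      rintro x (rfl | hx) b (rfl | hb)
      · rwa [h.mpq]
      · rcases hb with rfl; rwa [h.mpr]
      · rcases hx with rfl; rwa [h.hqq]
      · rcases hx with rfl; rcases hb with rfl; rwa [h.mqr]
    · refine mem_upMul_of {p, r} (h.pr_mem) (fun _ => {p, r})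
        (fun _ _ => h.pr_mem) ?_
      rintro x (rfl | hx) b (rfl | hb)
      · rwa [h.hpp]
      · rcases hb with rfl; rwa [h.mpr]
      · rcases hx with rfl; rwa [h.mrp]
      · rcases hx with rfl; rcases hb with rfl; rwa [h.hrr]
    · refine mem_upMul_of {q, r} (h.qr_mem) (fun _ => {q, r})
        (fun _ _ => h.qr_mem) ?_
      rintro x (rfl | hx) b (rfl | hb)
      · rwa [h.hqq]
      · rcases hb with rfl; rwa [h.mqr]
      · rcases hx with rfl; rwa [h.mrq]
      · rcases hx with rfl; rcases hb with rfl; rwa [h.hrr]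

end Sorted3

end Prod

section Card

universe u

lemma exists_four_distinct {X : Type u} (h : ¬ Cardinal.mk X ≤ 3) :
    ∃ a b c d : X, a ≠ b ∧ a ≠ c ∧ a ≠ d ∧ b ≠ c ∧ b ≠ d ∧ c ≠ d := by
  have h3 : (3 : Cardinal) < Cardinal.mk X := not_le.mp h
  have h4 : ((3 : ℕ) : Cardinal) + 1 ≤ Cardinal.mk X :=
    Cardinal.natCast_add_one_le_iff.mpr (by exact_mod_cast h3)
  have h4' : Cardinal.mk (ULift.{u} (Fin 4)) ≤ Cardinal.mk X := by
    simp only [Cardinal.mk_uLift, Cardinal.mk_fin, Cardinal.lift_natCast]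
    exact_mod_cast h4
  obtain ⟨f⟩ := (Cardinal.le_def _ _).mp h4'
  refine ⟨f ⟨0⟩, f ⟨1⟩, f ⟨2⟩, f ⟨3⟩, ?_, ?_, ?_, ?_, ?_, ?_⟩ <;>
    · intro hh; have := f.injective hh; simp [ULift.ext_iff] at this

lemma card_le_three_collapse {X : Type u} (h : Cardinal.mk X ≤ 3) :
    ∀ a b c d : X, a = b ∨ a = c ∨ a = d ∨ b = c ∨ b = d ∨ c = d := by
  intro a b c d
  by_contra hno
  push_neg at hno
  obtain ⟨h1, h2, h3, h4, h5, h6⟩ := hno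
  have hm : Cardinal.mk ({a, b, c, d} : Set X) = 4 := by
    rw [Cardinal.mk_insert (by simp [h1, h2, h3]), Cardinal.mk_insert (by simp [h4, h5]),
      Cardinal.mk_insert (by simp [h6]), Cardinal.mk_singleton]
    norm_num
  have := (hm ▸ Cardinal.mk_set_le ({a, b, c, d} : Set X)).trans h
  norm_num at this

end Card

section Classify

variable {X : Type*} [CommSemigroup X]

lemma classify (hid : ∀ x : X, x * x = x) (hlin : ∀ x y : X, x * y = x ∨ x * y = y)
    (h3 : ∀ a b c d : X, a = b ∨ a = c ∨ a = d ∨ b = c ∨ b = d ∨ c = d)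
    {𝒜 : Set (Set X)} (h𝒜 : IsMaxLinkedUp 𝒜) :
    𝒜 = ∅ ∨ (∃ x, 𝒜 = princ x) ∨
      (∃ p q r : X, Sorted3 p q r ∧ (∀ z : X, z = p ∨ z = q ∨ z = r) ∧
        𝒜 = tri p q r) := by
  by_cases hsing : ∃ x : X, ({x} : Set X) ∈ 𝒜
  · right; left
    obtain ⟨x, hx⟩ := hsing
    have hsub : 𝒜 ⊆ princ x := by
      intro A hA
      obtain ⟨y, hy1, hy2⟩ := h𝒜.1.2 A hA {x} hx
      have hyx : y = x := hy2
      exact hyx ▸ hy1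
    exact ⟨x, h𝒜.2 _ (princ_isMaxLinked x).1 hsub⟩
  · by_cases hemp : 𝒜 = ∅
    · exact Or.inl hemp
    right; right
    obtain ⟨A0, hA0⟩ := Set.nonempty_iff_ne_empty.mpr hemp
    have two_mem : ∀ A ∈ 𝒜, ∃ x ∈ A, ∃ y ∈ A, y ≠ x := by
      intro A hA
      obtain ⟨x, hx⟩ := h𝒜.1.1.1 A hA
      refine ⟨x, hx, ?_⟩
      by_contra hno
      push_neg at hno
      exact hsing ⟨x, (Set.eq_singleton_iff_unique_mem.mpr ⟨hx, hno⟩) ▸ hA⟩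
    obtain ⟨u, hu, v, hvA, hvu⟩ := two_mem A0 hA0
    have hw : ∃ w : X, w ≠ u ∧ w ≠ v := by
      by_contra hno
      push_neg at hno
      have hvmem : ({v} : Set X) ∈ 𝒜 := by
        apply mem_of_meets h𝒜 (Set.singleton_nonempty v)
        intro A hA
        by_cases hvA' : v ∈ A
        · exact ⟨v, hvA', rfl⟩
        · exfalso
          have hAu : A ⊆ {u} := by
            intro z hzA
            rcases eq_or_ne z u with rfl | hzu
            · exact rfl
            · exact absurd (hno z hzu ▸ hzA) hvA'
          have : A = {u} := ((h𝒜.1.1.1 A hA).subset_singleton_iff).mp hAu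
          exact hsing ⟨u, this ▸ hA⟩
      exact hsing ⟨v, hvmem⟩
    obtain ⟨w, hwu, hwv⟩ := hw
    obtain ⟨p, q, r, ⟨hpq, hpr, hqr⟩, ⟨mpq, mpr, mqr⟩, hperm⟩ :=
      sort3 hlin hvu.symm hwu.symm hwv.symm
    have hS : Sorted3 p q r := ⟨hpq, hpr, hqr, hid p, hid q, hid r, mpq, mpr, mqr⟩
    have hall : ∀ z : X, z = p ∨ z = q ∨ z = r := by
      intro z
      apply (hperm z).mp
      rcases h3 z u v w with h' | h' | h' | h' | h' | h'
      exacts [Or.inl h', Or.inr (Or.inl h'), Or.inr (Or.inr h'),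
        absurd h'.symm hvu, absurd h'.symm hwu, absurd h'.symm hwv]
    refine ⟨p, q, r, hS, hall, ?_⟩
    have hsub : 𝒜 ⊆ tri p q r := by
      intro A hA
      obtain ⟨x, hx, y, hyA, hyx⟩ := two_mem A hA
      rcases hall x with rfl | rfl | rfl <;> rcases hall y with rfl | rfl | rfl <;>
        first
          | exact absurd rfl hyx
          | exact Or.inl ⟨‹_›, ‹_›⟩
          | exact Or.inr (Or.inl ⟨‹_›, ‹_›⟩)
          | exact Or.inr (Or.inr ⟨‹_›, ‹_›⟩)
    exact h𝒜.2 _ (tri_isMaxLinked hpq hpr hqr).1 hsub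

end Classify

/-- For a commutative semigroup `X`, the semigroup `λ(X)` is linear iff `X` is a linear
semilattice of order `|X| ≤ 3`. -/
theorem stmt14 (X : Type*) [CommSemigroup X] :
    (∀ 𝒜 ℬ : Set (Set X), IsMaxLinkedUp 𝒜 → IsMaxLinkedUp ℬ →
        upMul 𝒜 ℬ = 𝒜 ∨ upMul 𝒜 ℬ = ℬ) ↔
      ((∀ x : X, x * x = x) ∧ (∀ x y : X, x * y = x ∨ x * y = y) ∧
        Cardinal.mk X ≤ 3) := by
  constructor
  · intro h
    have hid : ∀ x : X, x * x = x := by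
      intro x
      have h' := h (princ x) (princ x) (princ_isMaxLinked x) (princ_isMaxLinked x)
      rw [upMul_princ] at h'
      rcases h' with h' | h' <;> exact princ_inj h'
    have hlin : ∀ x y : X, x * y = x ∨ x * y = y := by
      intro x y
      have h' := h (princ x) (princ y) (princ_isMaxLinked x) (princ_isMaxLinked y)
      rw [upMul_princ] at h'
      rcases h' with h' | h'
      exacts [Or.inl (princ_inj h'), Or.inr (princ_inj h')]
    refine ⟨hid, hlin, ?_⟩
    by_contra hc
    obtain ⟨a, b, c, d, hab, hac, had, hbc, hbd, hcd⟩ := exists_four_distinct hc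
    obtain ⟨x1, x2, x3, x4, ⟨d12, d13, d14, d23, d24, d34⟩,
      ⟨m12, m13, m14, m23, m24, m34⟩⟩ := sort4 hlin hab hac had hbc hbd hcd
    have d21 := d12.symm
    have d31 := d13.symm
    have d41 := d14.symm
    have d32 := d23.symm
    have d42 := d24.symm
    have d43 := d34.symm
    have m32 : x3 * x2 = x2 := by rw [mul_comm]; exact m23
    have m42 : x4 * x2 = x2 := by rw [mul_comm]; exact m24
    have m43 : x4 * x3 = x3 := by rw [mul_comm]; exact m34
    have hT1 : IsMaxLinkedUp (tri x1 x3 x4) := tri_isMaxLinked d13 d14 d34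
    have hT2 : IsMaxLinkedUp (tri x2 x3 x4) := tri_isMaxLinked d23 d24 d34
    rcases h _ _ hT1 hT2 with hE | hE
    · have hC : ({x2, x3} : Set X) ∈ upMul (tri x1 x3 x4) (tri x2 x3 x4) := by
        refine mem_upMul_of {x3, x4} (Or.inr (Or.inr ⟨by simp, by simp⟩))
          (fun _ => {x2, x3}) (fun _ _ => Or.inl ⟨by simp, by simp⟩) ?_
        rintro x (rfl | hx) b (rfl | hb)
        · rw [m32]; simp
        · rcases hb with rfl; rw [hid]; simp
        · rcases hx with rfl; rw [m42]; simp
        · rcases hx with rfl; rcases hb with rfl; rw [m43]; simp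
      rw [hE] at hC
      rcases hC with ⟨h1, h2⟩ | ⟨h1, h2⟩ | ⟨h1, h2⟩ <;>
        simp only [Set.mem_insert_iff, Set.mem_singleton_iff] at h1 h2 <;> tauto
    · have hC : ({x1, x3} : Set X) ∈ upMul (tri x1 x3 x4) (tri x2 x3 x4) := by
        refine mem_upMul_of {x1, x3} (Or.inl ⟨by simp, by simp⟩)
          (fun _ => {x3, x4}) (fun _ _ => Or.inr (Or.inr ⟨by simp, by simp⟩)) ?_
        rintro x (rfl | hx) b (rfl | hb)
        · rw [m13]; simp
        · rcases hb with rfl; rw [m14]; simp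
        · rcases hx with rfl; rw [hid]; simp
        · rcases hx with rfl; rcases hb with rfl; rw [m34]; simp
      rw [hE] at hC
      rcases hC with ⟨h1, h2⟩ | ⟨h1, h2⟩ | ⟨h1, h2⟩ <;>
        simp only [Set.mem_insert_iff, Set.mem_singleton_iff] at h1 h2 <;> tauto
  · rintro ⟨hid, hlin, hcard⟩ 𝒜 ℬ h𝒜 hℬ
    have h3 := card_le_three_collapse hcard
    rcases classify hid hlin h3 h𝒜 with rfl | ⟨x, rfl⟩ | ⟨p, q, r, hS, hall, rfl⟩
    · left; exact upMul_empty_left ℬ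
    · rcases classify hid hlin h3 hℬ with rfl | ⟨y, rfl⟩ | ⟨p, q, r, hS, hall, rfl⟩
      · right; exact upMul_empty_right (princ_isMaxLinked x).1.1.1
      · rw [upMul_princ]
        rcases hlin x y with h' | h' <;> rw [h']
        · exact Or.inl rfl
        · exact Or.inr rfl
      · rcases hall x with rfl | rfl | rfl
        · exact Or.inl hS.princ_p_mul_tri
        · exact Or.inl hS.princ_q_mul_tri
        · exact Or.inr hS.princ_r_mul_tri
    · rcases classify hid hlin h3 hℬ with rfl | ⟨y, rfl⟩ | ⟨p', q', r', hS', hall', rfl⟩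
      · right
        exact upMul_empty_right (tri_isMaxLinked hS.hpq hS.hpr hS.hqr).1.1.1
      · rcases hall y with rfl | rfl | rfl
        · exact Or.inr hS.tri_mul_princ_p
        · exact Or.inr hS.tri_mul_princ_q
        · exact Or.inl hS.tri_mul_princ_r
      · have heq : tri p q r = tri p' q' r' :=
          Set.Subset.antisymm (tri_subset hS.hpq hS.hpr hS.hqr hall')
            (tri_subset hS'.hpq hS'.hpr hS'.hqr hall)
        rw [← heq]
        exact Or.inl hS.tri_mul_tri
end

section
/- The superextension λ(4) of the 4-element linearly ordered semilattice 4 = {0,1,2,3} with operation x·y = min{x,y} is a semilattice with exactly 12 elements that is not linear. -/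
open Set

/-- The product of two upfamilies with respect to a binary operation `op` on `X`:
`𝒜 ∗ ℬ = {C ⊆ X : ∃ A ∈ 𝒜, ∃ (B_x)_{x ∈ A} in ℬ, ⋃_{x ∈ A} op x ''(B_x) ⊆ C}`. -/
def upMulOp {X : Type*} (op : X → X → X) (𝒜 ℬ : Set (Set X)) : Set (Set X) :=
  {C | ∃ A ∈ 𝒜, ∃ Bf : X → Set X, (∀ x ∈ A, Bf x ∈ ℬ) ∧
    (⋃ x ∈ A, (fun b => op x b) '' Bf x) ⊆ C}

namespace S15

/-! ### Encoding subsets of `Fin 4` by bitmasks in `Fin 16` -/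

def decode (k : Fin 16) : Finset (Fin 4) := Finset.univ.filter (fun i => k.val.testBit i.val)

def code (s : Finset (Fin 4)) : Fin 16 :=
  ⟨((if (0:Fin 4) ∈ s then 1 else 0) + (if (1:Fin 4) ∈ s then 2 else 0) +
    (if (2:Fin 4) ∈ s then 4 else 0) + (if (3:Fin 4) ∈ s then 8 else 0)) % 16,
   Nat.mod_lt _ (by norm_num)⟩

def compl16 (k : Fin 16) : Fin 16 := ⟨15 - k.val, by omega⟩

lemma decode_code : ∀ s, decode (code s) = s := by decide
lemma code_decode : ∀ k, code (decode k) = k := by decide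
lemma decode_compl : ∀ k, decode (compl16 k) = (decode k)ᶜ := by decide
lemma code_compl : ∀ s : Finset (Fin 4), code sᶜ = compl16 (code s) := by decide
lemma sub_iff : ∀ s t : Finset (Fin 4), s ⊆ t ↔ (code s).val &&& (code t).val = (code s).val := by
  decide
lemma inter_iff : ∀ s t : Finset (Fin 4),
    (s ∩ t).Nonempty ↔ (code s).val &&& (code t).val ≠ 0 := by decide
lemma nonempty_iff : ∀ s : Finset (Fin 4), s.Nonempty ↔ (code s).val ≠ 0 := by decide
lemma mem_code : ∀ (s : Finset (Fin 4)) (y : Fin 4), y ∈ s ↔ (code s).val.testBit y.val := by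
  decide

/-! ### Good bitmask families and their classification -/

def good (G : Finset (Fin 16)) : Prop :=
  (∀ k : Fin 16, (k ∈ G) ↔ compl16 k ∉ G) ∧
  (∀ j ∈ G, ∀ k ∈ G, j.val &&& k.val ≠ 0) ∧
  (∀ j ∈ G, ∀ k : Fin 16, j.val &&& k.val = j.val → k ∈ G)

instance : DecidablePred good := fun G => by unfold good; infer_instance

def expand (H : Finset (Fin 8)) : Finset (Fin 16) :=
  Finset.univ.filter (fun k : Fin 16 =>
    if h : 8 ≤ k.val then (⟨k.val - 8, by omega⟩ : Fin 8) ∈ H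
    else (⟨7 - k.val, by omega⟩ : Fin 8) ∉ H)

def msk (m : ℕ) : Finset (Fin 16) := Finset.univ.filter (fun k => m.testBit k.val)

def l12 : List ℕ :=
  [43690, 52428, 59624, 60072, 60616, 61064, 61680, 63712, 64160, 64704, 65152, 65280]

set_option maxHeartbeats 4000000 in
set_option maxRecDepth 10000 in
lemma classify_aux : ∀ H : Finset (Fin 8), good (expand H) → ∃ m ∈ l12, expand H = msk m := by
  decide

lemma eq_expand (G : Finset (Fin 16)) (h : ∀ k : Fin 16, (k ∈ G) ↔ compl16 k ∉ G) :
    G = expand (Finset.univ.filter (fun j : Fin 8 => (⟨j.val + 8, by omega⟩ : Fin 16) ∈ G)) := by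
  ext k
  simp only [expand, Finset.mem_filter, Finset.mem_univ, true_and]
  split
  · next h8 =>
    have hk8 : (⟨(⟨k.val - 8, by omega⟩ : Fin 8).val + 8, by omega⟩ : Fin 16) = k := by
      simp [Fin.ext_iff]; omega
    rw [hk8]
  · next h8 =>
    push_neg at h8
    have h15 : (⟨(7 - k.val) + 8, by omega⟩ : Fin 16) = compl16 k := by
      simp [compl16, Fin.ext_iff]; omega
    rw [h k]
    simp [h15]

lemma classify (G : Finset (Fin 16)) (hG : good G) : ∃ m ∈ l12, G = msk m := by
  have := eq_expand G hG.1
  rw [this] at hG ⊢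
  exact classify_aux _ hG

/-! ### From bitmask families to maximal linked upfamilies -/

noncomputable def toF (A : Set (Fin 4)) : Finset (Fin 4) := A.toFinite.toFinset

lemma mem_toF {A : Set (Fin 4)} {x : Fin 4} : x ∈ toF A ↔ x ∈ A := Set.Finite.mem_toFinset _
lemma coe_toF (A : Set (Fin 4)) : (↑(toF A) : Set (Fin 4)) = A := Set.Finite.coe_toFinset _
lemma toF_coe (s : Finset (Fin 4)) : toF ↑s = s := by ext x; simp [mem_toF]
lemma toF_compl (A : Set (Fin 4)) : toF Aᶜ = (toF A)ᶜ := by ext x; simp [mem_toF]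

noncomputable def mfam (G : Finset (Fin 16)) : Set (Set (Fin 4)) := {A | code (toF A) ∈ G}

lemma mem_mfam {G : Finset (Fin 16)} {A : Set (Fin 4)} : A ∈ mfam G ↔ code (toF A) ∈ G := Iff.rfl

lemma mfam_inj : Function.Injective mfam := by
  intro F G h
  ext k
  have := Set.ext_iff.1 h ↑(decode k)
  rwa [mem_mfam, mem_mfam, toF_coe, code_decode] at this

lemma isUpfamily_mfam {G : Finset (Fin 16)} (hG : good G) : IsUpfamily (mfam G) := by
  constructor
  · intro A hA
    have h0 : (code (toF A)).val &&& (code (toF A)).val ≠ 0 := hG.2.1 _ hA _ hA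
    have hself : ∀ k : Fin 16, k.val &&& k.val = k.val := by decide
    rw [hself] at h0
    obtain ⟨x, hx⟩ := (nonempty_iff (toF A)).2 h0
    exact ⟨x, mem_toF.1 hx⟩
  · intro A hA B hAB
    have hsub : toF A ⊆ toF B := fun x hx => mem_toF.2 (hAB (mem_toF.1 hx))
    exact hG.2.2 _ hA _ ((sub_iff _ _).1 hsub)

lemma isLinkedUp_mfam {G : Finset (Fin 16)} (hG : good G) : IsLinkedUp (mfam G) := by
  refine ⟨isUpfamily_mfam hG, fun A hA B hB => ?_⟩
  obtain ⟨x, hx⟩ := (inter_iff (toF A) (toF B)).2 (hG.2.1 _ hA _ hB)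
  obtain ⟨h1, h2⟩ := Finset.mem_inter.1 hx
  exact ⟨x, mem_toF.1 h1, mem_toF.1 h2⟩

lemma dual_mfam {G : Finset (Fin 16)} (hG : good G) (A : Set (Fin 4)) :
    A ∈ mfam G ∨ Aᶜ ∈ mfam G := by
  by_cases h : code (toF A) ∈ G
  · exact Or.inl h
  · right
    have hc : compl16 (code (toF A)) ∈ G := by
      by_contra hc
      exact h ((hG.1 _).2 hc)
    show code (toF Aᶜ) ∈ G
    rwa [toF_compl, code_compl]

lemma isMaxLinkedUp_mfam {G : Finset (Fin 16)} (hG : good G) : IsMaxLinkedUp (mfam G) := by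
  refine ⟨isLinkedUp_mfam hG, fun ℬ hB hsub => ?_⟩
  apply Set.Subset.antisymm hsub
  intro B hBmem
  by_contra hBn
  rcases dual_mfam hG B with h | h
  · exact hBn h
  · obtain ⟨x, hx1, hx2⟩ := hB.2 B hBmem Bᶜ (hsub h)
    exact hx2 hx1

/-! ### Every maximal linked upfamily comes from a good bitmask family -/

lemma principal_linked (x : Fin 4) : IsLinkedUp {A : Set (Fin 4) | x ∈ A} :=
  ⟨⟨fun _ hA => ⟨x, hA⟩, fun _ hA _ hAB => hAB hA⟩, fun A hA B hB => ⟨x, hA, hB⟩⟩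

lemma univ_mem_of_max {𝒜 : Set (Set (Fin 4))} (h : IsMaxLinkedUp 𝒜) : univ ∈ 𝒜 := by
  rcases Set.eq_empty_or_nonempty 𝒜 with he | ⟨M, hM⟩
  · exfalso
    have h0 := h.2 _ (principal_linked 0) (by simp [he])
    have h1 := h.2 _ (principal_linked 1) (by simp [he])
    have hmem : ({0} : Set (Fin 4)) ∈ {A : Set (Fin 4) | (0:Fin 4) ∈ A} := rfl
    rw [← h0, h1] at hmem
    have : (1 : Fin 4) ∈ ({0} : Set (Fin 4)) := hmem
    simp at this
  · exact h.1.1.2 M hM univ (subset_univ M)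

lemma dual_of_max {𝒜 : Set (Set (Fin 4))} (h : IsMaxLinkedUp 𝒜) (A : Set (Fin 4)) :
    A ∈ 𝒜 ∨ Aᶜ ∈ 𝒜 := by
  by_contra hcon
  push_neg at hcon
  obtain ⟨hA, hAc⟩ := hcon
  by_cases hmeet : ∀ M ∈ 𝒜, (M ∩ A).Nonempty
  · have hAne : A.Nonempty := by
      obtain ⟨x, -, hxA⟩ := hmeet univ (univ_mem_of_max h)
      exact ⟨x, hxA⟩
    set ℬ : Set (Set (Fin 4)) := {B | B ∈ 𝒜 ∨ A ⊆ B} with hBdef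
    have hlink : IsLinkedUp ℬ := by
      refine ⟨⟨?_, ?_⟩, ?_⟩
      · rintro B (hB | hB)
        · exact h.1.1.1 B hB
        · exact hAne.mono hB
      · rintro B (hB | hB) C hBC
        · exact Or.inl (h.1.1.2 B hB C hBC)
        · exact Or.inr (hB.trans hBC)
      · rintro B (hB | hB) C (hC | hC)
        · exact h.1.2 B hB C hC
        · obtain ⟨x, hx1, hx2⟩ := hmeet B hB
          exact ⟨x, hx1, hC hx2⟩
        · obtain ⟨x, hx1, hx2⟩ := hmeet C hC
          exact ⟨x, hB hx2, hx1⟩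
        · obtain ⟨x, hx⟩ := hAne
          exact ⟨x, hB hx, hC hx⟩
    have heq := h.2 ℬ hlink (fun B hB => Or.inl hB)
    exact hA (by rw [heq]; exact Or.inr (subset_refl A))
  · push_neg at hmeet
    obtain ⟨M, hM, hMA⟩ := hmeet
    have hsub : M ⊆ Aᶜ := fun x hx hxA => by
      have hxM : x ∈ M ∩ A := ⟨hx, hxA⟩
      rw [hMA] at hxM
      exact hxM
    exact hAc (h.1.1.2 M hM Aᶜ hsub)

lemma exists_rep {𝒜 : Set (Set (Fin 4))} (h : IsMaxLinkedUp 𝒜) :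
    ∃ m ∈ l12, 𝒜 = mfam (msk m) := by
  classical
  set G : Finset (Fin 16) :=
    Finset.univ.filter (fun k => (↑(decode k) : Set (Fin 4)) ∈ 𝒜) with hGdef
  have hmem : ∀ k : Fin 16, k ∈ G ↔ (↑(decode k) : Set (Fin 4)) ∈ 𝒜 := by
    intro k; simp [hGdef]
  have hcompl : ∀ k : Fin 16,
      (↑(decode (compl16 k)) : Set (Fin 4)) = (↑(decode k) : Set (Fin 4))ᶜ := by
    intro k
    rw [decode_compl, Finset.coe_compl]
  have hgood : good G := by
    refine ⟨?_, ?_, ?_⟩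
    · intro k
      constructor
      · intro hk hk'
        rw [hmem, hcompl] at hk'
        rw [hmem] at hk
        obtain ⟨x, hx1, hx2⟩ := h.1.2 _ hk _ hk'
        exact hx2 hx1
      · intro hk'
        rcases dual_of_max h ↑(decode k) with h1 | h1
        · exact (hmem k).2 h1
        · exact absurd ((hmem _).2 (by rw [hcompl]; exact h1)) hk'
    · intro j hj k hk
      rw [hmem] at hj hk
      obtain ⟨x, hx1, hx2⟩ := h.1.2 _ hj _ hk
      have hne : (decode j ∩ decode k).Nonempty :=
        ⟨x, Finset.mem_inter.2 ⟨Finset.mem_coe.1 hx1, Finset.mem_coe.1 hx2⟩⟩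
      have := (inter_iff _ _).1 hne
      rwa [code_decode, code_decode] at this
    · intro j hj k hland
      have hsub : decode j ⊆ decode k := by
        rw [sub_iff, code_decode, code_decode]
        exact hland
      rw [hmem] at hj ⊢
      exact h.1.1.2 _ hj _ (Finset.coe_subset.2 hsub)
  obtain ⟨m, hm, hGm⟩ := classify G hgood
  refine ⟨m, hm, ?_⟩
  rw [← hGm]
  ext A
  rw [mem_mfam, hmem, decode_code, coe_toF]

/-! ### The product in terms of bitmask families -/

lemma mem_upMulOp {𝒜 ℬ : Set (Set (Fin 4))}
    (hA : ∀ A ∈ 𝒜, ∀ B : Set (Fin 4), A ⊆ B → B ∈ 𝒜)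
    (hB : ∀ A ∈ ℬ, ∀ B : Set (Fin 4), A ⊆ B → B ∈ ℬ) (C : Set (Fin 4)) :
    C ∈ upMulOp min 𝒜 ℬ ↔ {x | {y | min x y ∈ C} ∈ ℬ} ∈ 𝒜 := by
  constructor
  · rintro ⟨A, hAm, Bf, hBf, hsub⟩
    apply hA A hAm
    intro x hx
    apply hB (Bf x) (hBf x hx)
    intro y hy
    exact hsub (Set.mem_biUnion hx ⟨y, hy, rfl⟩)
  · intro hmem
    refine ⟨_, hmem, fun x => {y | min x y ∈ C}, fun x hx => hx, ?_⟩
    intro z hz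
    simp only [Set.mem_iUnion, Set.mem_image] at hz
    obtain ⟨x, hx, y, hy, rfl⟩ := hz
    exact hy

def bfun (c : Fin 16) (x : Fin 4) : Fin 16 :=
  ⟨((c.val &&& (2^x.val - 1)) + (if c.val.testBit x.val then 16 - 2^x.val else 0)) % 16,
   Nat.mod_lt _ (by norm_num)⟩

lemma bfun_eq : ∀ (c : Fin 16) (x : Fin 4),
    code (Finset.univ.filter (fun y : Fin 4 => c.val.testBit (min x y).val)) = bfun c x := by
  decide

def pr (F G : Finset (Fin 16)) : Finset (Fin 16) :=
  Finset.univ.filter (fun c =>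
    code (Finset.univ.filter (fun x : Fin 4 => bfun c x ∈ G)) ∈ F)

lemma upMulOp_mfam {F G : Finset (Fin 16)} (hF : good F) (hG : good G) :
    upMulOp min (mfam F) (mfam G) = mfam (pr F G) := by
  classical
  ext C
  rw [mem_upMulOp (isUpfamily_mfam hF).2 (isUpfamily_mfam hG).2 C, mem_mfam, mem_mfam, pr,
    Finset.mem_filter]
  simp only [Finset.mem_univ, true_and]
  have key : toF {x | {y | min x y ∈ C} ∈ mfam G}
      = Finset.univ.filter (fun x : Fin 4 => bfun (code (toF C)) x ∈ G) := by
    ext x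
    rw [mem_toF]
    simp only [Finset.mem_filter, Finset.mem_univ, true_and, Set.mem_setOf_eq]
    rw [mem_mfam, ← bfun_eq (code (toF C)) x]
    have hinner : toF {y | min x y ∈ C}
        = Finset.univ.filter (fun y : Fin 4 => (code (toF C)).val.testBit (min x y).val) := by
      ext y
      rw [mem_toF]
      simp only [Finset.mem_filter, Finset.mem_univ, true_and, Set.mem_setOf_eq]
      rw [← mem_code, mem_toF]
    rw [hinner]
  rw [key]

/-! ### Finite checks on the twelve families -/

lemma good_l12 : ∀ m ∈ l12, good (msk m) := by decide

set_option maxRecDepth 40000 in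
lemma pr_tab : ∀ f ∈ l12, ∀ g ∈ l12,
    pr (msk f) (msk g) ∈ l12.map msk ∧ pr (msk f) (msk g) = pr (msk g) (msk f) := by decide

set_option maxRecDepth 40000 in
lemma pr_idem : ∀ f ∈ l12, pr (msk f) (msk f) = msk f := by decide

lemma witness : pr (msk 60072) (msk 60616) ≠ msk 60072 ∧
    pr (msk 60072) (msk 60616) ≠ msk 60616 ∧ 60072 ∈ l12 ∧ 60616 ∈ l12 := by decide

lemma msk_injOn : ∀ f ∈ l12, ∀ g ∈ l12, msk f = msk g → f = g := by decide

lemma set_eq : {𝒜 : Set (Set (Fin 4)) | IsMaxLinkedUp 𝒜} = (fun m => mfam (msk m)) '' ↑l12.toFinset := by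
  ext 𝒜
  constructor
  · intro h
    obtain ⟨m, hm, rfl⟩ := exists_rep h
    exact ⟨m, by simpa using hm, rfl⟩
  · rintro ⟨m, hm, rfl⟩
    exact isMaxLinkedUp_mfam (good_l12 m (by simpa using hm))

lemma ncard12 : {𝒜 : Set (Set (Fin 4)) | IsMaxLinkedUp 𝒜}.ncard = 12 := by
  rw [set_eq, Set.ncard_image_of_injOn, Set.ncard_coe_finset]
  · decide
  · intro a ha b hb hab
    exact msk_injOn a (by simpa using ha) b (by simpa using hb) (mfam_inj hab)

end S15

/-- The superextension `λ(4)` of the 4-element linearly ordered semilattice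
`4 = {0,1,2,3}` with `x·y = min{x,y}` is a semilattice (closed under the product, which is
commutative and idempotent on it) with exactly 12 elements, and it is not linear. -/
theorem stmt15 :
    (∀ 𝒜 ℬ : Set (Set (Fin 4)), IsMaxLinkedUp 𝒜 → IsMaxLinkedUp ℬ →
        IsMaxLinkedUp (upMulOp min 𝒜 ℬ)) ∧
    (∀ 𝒜 ℬ : Set (Set (Fin 4)), IsMaxLinkedUp 𝒜 → IsMaxLinkedUp ℬ →
        upMulOp min 𝒜 ℬ = upMulOp min ℬ 𝒜) ∧
    (∀ 𝒜 : Set (Set (Fin 4)), IsMaxLinkedUp 𝒜 → upMulOp min 𝒜 𝒜 = 𝒜) ∧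
    {𝒜 : Set (Set (Fin 4)) | IsMaxLinkedUp 𝒜}.ncard = 12 ∧
    ¬ (∀ 𝒜 ℬ : Set (Set (Fin 4)), IsMaxLinkedUp 𝒜 → IsMaxLinkedUp ℬ →
        upMulOp min 𝒜 ℬ = 𝒜 ∨ upMulOp min 𝒜 ℬ = ℬ) := by
  refine ⟨?_, ?_, ?_, S15.ncard12, ?_⟩
  · intro 𝒜 ℬ hA hB
    obtain ⟨f, hf, rfl⟩ := S15.exists_rep hA
    obtain ⟨g, hg, rfl⟩ := S15.exists_rep hB
    rw [S15.upMulOp_mfam (S15.good_l12 f hf) (S15.good_l12 g hg)]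
    obtain ⟨hmem, -⟩ := S15.pr_tab f hf g hg
    obtain ⟨h, hh, hEq⟩ := List.mem_map.1 hmem
    rw [← hEq]
    exact S15.isMaxLinkedUp_mfam (S15.good_l12 h hh)
  · intro 𝒜 ℬ hA hB
    obtain ⟨f, hf, rfl⟩ := S15.exists_rep hA
    obtain ⟨g, hg, rfl⟩ := S15.exists_rep hB
    rw [S15.upMulOp_mfam (S15.good_l12 f hf) (S15.good_l12 g hg),
      S15.upMulOp_mfam (S15.good_l12 g hg) (S15.good_l12 f hf),
      (S15.pr_tab f hf g hg).2]
  · intro 𝒜 hA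
    obtain ⟨f, hf, rfl⟩ := S15.exists_rep hA
    rw [S15.upMulOp_mfam (S15.good_l12 f hf) (S15.good_l12 f hf), S15.pr_idem f hf]
  · intro hlin
    obtain ⟨hne1, hne2, hf1, hg1⟩ := S15.witness
    have g1 := S15.good_l12 _ hf1
    have g2 := S15.good_l12 _ hg1
    rcases hlin _ _ (S15.isMaxLinkedUp_mfam g1) (S15.isMaxLinkedUp_mfam g2) with h | h <;>
      rw [S15.upMulOp_mfam g1 g2] at h
    · exact hne1 (S15.mfam_inj h)
    · exact hne2 (S15.mfam_inj h)
end

section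
/- Let X be a band and x, y ∈ X be elements with x·y ∉ {x, y}. Then the maximal linked upfamily ℒ = ⟨{x,y}, {x,xy}, {y,xy}⟩ is not a regular element of the semigroup υ(X); that is, there is no upfamily 𝒜 ∈ υ(X) with ℒ∗𝒜∗ℒ = ℒ. -/
open Set

/-- The upper closure `⟨ℬ⟩ = {A ⊆ X : ∃ B ∈ ℬ, B ⊆ A}`. -/
def upClosure {X : Type*} (ℬ : Set (Set X)) : Set (Set X) := {A | ∃ B ∈ ℬ, B ⊆ A}

/-- If `X` is a band and `x·y ∉ {x,y}`, then the maximal linked upfamily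
`ℒ = ⟨{x,y}, {x,xy}, {y,xy}⟩` is not a regular element of `υ(X)`:
there is no upfamily `𝒜` with `ℒ ∗ 𝒜 ∗ ℒ = ℒ`. -/
theorem stmt17 (X : Type*) [Semigroup X] (hband : ∀ a : X, a * a = a)
    (x y : X) (hx : x * y ≠ x) (hy : x * y ≠ y) :
    ¬ ∃ 𝒜 : Set (Set X), IsUpfamily 𝒜 ∧
        upMul (upMul (upClosure {{x, y}, {x, x * y}, {y, x * y}}) 𝒜)
            (upClosure {{x, y}, {x, x * y}, {y, x * y}}) =
          upClosure {{x, y}, {x, x * y}, {y, x * y}} := by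
  rintro ⟨𝒜, h𝒜, heq⟩
  set ℒ : Set (Set X) := upClosure {{x, y}, {x, x * y}, {y, x * y}} with hℒ
  -- {x, y} ∈ ℒ
  have hxyℒ : ({x, y} : Set X) ∈ ℒ := ⟨{x, y}, by left; rfl, subset_rfl⟩
  -- hence {x,y} ∈ (ℒ ∗ 𝒜) ∗ ℒ
  rw [← heq] at hxyℒ
  obtain ⟨M, hM, Lf, hLf, hsub⟩ := hxyℒ
  obtain ⟨L, hL, Af, hAf, hMsub⟩ := hM
  -- key band fact: (x*y)*y = x*y
  have hzy : (x * y) * y = x * y := by rw [mul_assoc, hband y]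
  -- key band fact: x*(x*y) = x*y
  have hxz : x * (x * y) = x * y := by rw [← mul_assoc, hband x]
  -- find l₀ ∈ L with l₀ * y ≠ y
  obtain ⟨B, hB, hBL⟩ := hL
  have hl₀ : ∃ l₀ ∈ L, l₀ * y ≠ y := by
    rcases hB with hB | hB | hB
    · exact ⟨x, hBL (by rw [hB]; left; rfl), hy⟩
    · exact ⟨x, hBL (by rw [hB]; left; rfl), hy⟩
    · refine ⟨x * y, hBL (by rw [hB]; right; rfl), ?_⟩
      rw [hzy]; exact hy
  obtain ⟨l₀, hl₀L, hl₀y⟩ := hl₀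
  -- pick a ∈ Af l₀, set m := l₀ * a ∈ M
  obtain ⟨a, ha⟩ := h𝒜.1 (Af l₀) (hAf l₀ hl₀L)
  have hmM : l₀ * a ∈ M := by
    apply hMsub
    exact mem_iUnion₂_of_mem hl₀L ⟨a, ha, rfl⟩
  -- find u₀ ∈ Lf (l₀ * a) with x * u₀ ≠ x
  obtain ⟨B', hB', hB'sub⟩ := hLf (l₀ * a) hmM
  have hu₀ : ∃ u₀ ∈ Lf (l₀ * a), x * u₀ ≠ x := by
    rcases hB' with hB' | hB' | hB'
    · exact ⟨y, hB'sub (by rw [hB']; right; rfl), hx⟩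
    · refine ⟨x * y, hB'sub (by rw [hB']; right; rfl), ?_⟩
      rw [hxz]; exact hx
    · exact ⟨y, hB'sub (by rw [hB']; left; rfl), hx⟩
  obtain ⟨u₀, hu₀mem, hu₀x⟩ := hu₀
  -- w := (l₀ * a) * u₀ ∈ {x, y}
  have hw : (l₀ * a) * u₀ ∈ ({x, y} : Set X) := by
    apply hsub
    exact mem_iUnion₂_of_mem hmM ⟨u₀, hu₀mem, rfl⟩
  -- l₀ * w = w
  have hlw : l₀ * ((l₀ * a) * u₀) = (l₀ * a) * u₀ := by
    rw [← mul_assoc, ← mul_assoc, hband l₀]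
  -- w * u₀ = w
  have hwu : ((l₀ * a) * u₀) * u₀ = (l₀ * a) * u₀ := by
    rw [mul_assoc, hband u₀]
  rcases hw with hw | hw
  · -- w = x : then x * u₀ = x, contradiction
    rw [hw] at hwu
    exact hu₀x hwu
  · -- w = y : then l₀ * y = y, contradiction
    rw [mem_singleton_iff] at hw
    rw [hw] at hlw
    exact hl₀y hlw
end

section
/- If X is a semilattice containing two elements x, y with x·y ∉ {x, y}, then the semigroup N₂(X) of linked upfamilies is not commutative; specifically, the linked upfamilies 𝒜 = ⟨{x,y}⟩ and ℬ = ⟨{x,xy},{y,xy}⟩ satisfy {xy} ∈ 𝒜∗ℬ but {xy} ∉ ℬ∗𝒜. -/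
open Set

/-- If `X` is a semilattice with `x·y ∉ {x,y}`, then `N₂(X)` is not commutative: the
linked upfamilies `𝒜 = ⟨{x,y}⟩` and `ℬ = ⟨{x,xy},{y,xy}⟩` satisfy
`{xy} ∈ 𝒜 ∗ ℬ` but `{xy} ∉ ℬ ∗ 𝒜`. -/
theorem stmt19 (X : Type*) [CommSemigroup X] (hidem : ∀ a : X, a * a = a)
    (x y : X) (hx : x * y ≠ x) (hy : x * y ≠ y) :
    ({x * y} : Set X) ∈ upMul (upClosure {{x, y}}) (upClosure {{x, x * y}, {y, x * y}}) ∧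
    ({x * y} : Set X) ∉ upMul (upClosure {{x, x * y}, {y, x * y}}) (upClosure {{x, y}}) ∧
    upMul (upClosure {{x, y}}) (upClosure {{x, x * y}, {y, x * y}}) ≠
      upMul (upClosure {{x, x * y}, {y, x * y}}) (upClosure {{x, y}}) := by
  have hxxy : x * (x * y) = x * y := by rw [← mul_assoc, hidem]
  have hyxy : y * (x * y) = x * y := by
    rw [mul_comm x y, ← mul_assoc, hidem, mul_comm]
  have h1 : ({x * y} : Set X) ∈
      upMul (upClosure {{x, y}}) (upClosure {{x, x * y}, {y, x * y}}) := by
    classical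
    refine ⟨{x, y}, ⟨{x, y}, rfl, subset_rfl⟩,
      fun a => if a = x then {y, x * y} else {x, x * y}, ?_, ?_⟩
    · intro a _
      by_cases h : a = x
      · simp only [if_pos h]; exact ⟨{y, x * y}, Or.inr rfl, subset_rfl⟩
      · simp only [if_neg h]; exact ⟨{x, x * y}, Or.inl rfl, subset_rfl⟩
    · rintro c hc
      simp only [mem_iUnion, mem_image] at hc
      obtain ⟨a, ha, b, hb, rfl⟩ := hc
      by_cases h : a = x
      · simp only [if_pos h] at hb
        rcases hb with rfl | rfl
        · simp [h]
        · simp [h, hxxy]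
      · simp only [if_neg h] at hb
        have ha' : a = y := ha.resolve_left h
        rcases hb with rfl | rfl
        · simp [ha', mul_comm]
        · simp [ha', hyxy]
  have h2 : ({x * y} : Set X) ∉
      upMul (upClosure {{x, x * y}, {y, x * y}}) (upClosure {{x, y}}) := by
    rintro ⟨A, ⟨B, hB, hBA⟩, Bf, hBf, hsub⟩
    have key : ∀ a ∈ A, a * x ∈ ({x * y} : Set X) ∧ a * y ∈ ({x * y} : Set X) := by
      intro a ha
      obtain ⟨C, hC, hCBf⟩ := hBf a ha
      rcases hC with rfl | rfl <;>
        exact ⟨hsub (mem_biUnion ha ⟨x, hCBf (Or.inl rfl), rfl⟩),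
          hsub (mem_biUnion ha ⟨y, hCBf (Or.inr rfl), rfl⟩)⟩
    rcases hB with rfl | rfl
    · have hxA : x ∈ A := hBA (Or.inl rfl)
      have := (key x hxA).1
      rw [hidem] at this
      exact hx this.symm
    · have hyA : y ∈ A := hBA (Or.inl rfl)
      have := (key y hyA).2
      rw [hidem] at this
      exact hy this.symm
  exact ⟨h1, h2, fun h => h2 (h ▸ h1)⟩
end
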